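/- arXiv:2504.13155 — 2 statements merged into one kernel-verified Lean document; each statement's English description precedes it below -/
import Mathlib

section
/- If a Hermitian holomorphic vector bundle (E,h) over a compact complex manifold X is mean curvature positive with respect to some Hermitian metric g on X (i.e., tr_g R^{(E,h)} is a positive definite Hermitian form on E), then (E,h) is BC-p positive for every p ≥ 1. -/
/- Summing the mean curvature positivity `∑ⱼ R(εⱼ, ε̄ⱼ, eᵢ, ēᵢ) > 0` over the vectors `eᵢ` of a
unitary basis of `Σ` and exchanging the two sums shows that `∑ᵢ R(εⱼ, ε̄ⱼ, eᵢ, ēᵢ) > 0` for some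
frame vector `εⱼ`; that `εⱼ` is the direction `v` required by BC-p positivity. -/

def BCpPos {X : Type*} {T E : X → Type*}
    [∀ x, NormedAddCommGroup (E x)] [∀ x, InnerProductSpace ℂ (E x)]
    (R : ∀ x, T x → E x → ℝ) (p : ℕ) : Prop :=
  ∀ x (e : Fin p → E x), Orthonormal ℂ e → ∃ v : T x, 0 < ∑ i, R x v (e i)

open Finset

theorem exists_pos_sum_of_pos_sum_sum {ι κ : Type*} [Fintype ι] [Fintype κ] {f : ι → κ → ℝ}
    (h : 0 < ∑ i, ∑ j, f i j) : ∃ j, 0 < ∑ i, f i j := by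
  rw [sum_comm, ← sum_const_zero (s := (univ : Finset κ))] at h
  obtain ⟨j, -, hj⟩ := exists_lt_of_sum_lt h
  exact ⟨j, hj⟩

theorem stmt2_general {X : Type*}
    {T E : X → Type*}
    [∀ x, NormedAddCommGroup (E x)] [∀ x, InnerProductSpace ℂ (E x)]
    (R : ∀ x, T x → E x → ℝ) (n : ℕ)
    (ε : ∀ x, Fin n → T x)
    (hmean : ∀ x (e : E x), e ≠ 0 → 0 < ∑ i, R x (ε x i) e) :
    ∀ p : ℕ, 1 ≤ p → BCpPos R p := by
  intro p hp x e he
  have : Nonempty (Fin p) := ⟨⟨0, hp⟩⟩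
  have htotal : 0 < ∑ i, ∑ j, R x (ε x j) (e i) :=
    sum_pos (fun i _ => hmean x (e i) (he.ne_zero i)) univ_nonempty
  obtain ⟨j, hj⟩ := exists_pos_sum_of_pos_sum_sum htotal
  exact ⟨ε x j, hj⟩

theorem stmt2 {X : Type*} [TopologicalSpace X] [CompactSpace X]
    {T E : X → Type*}
    [∀ x, NormedAddCommGroup (E x)] [∀ x, InnerProductSpace ℂ (E x)]
    [∀ x, NormedAddCommGroup (T x)] [∀ x, InnerProductSpace ℂ (T x)]
    (R : ∀ x, T x → E x → ℝ) (n : ℕ)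
    (ε : ∀ x, Fin n → T x)
    (hframe : ∀ x, Orthonormal ℂ (ε x))
    (hbasis : ∀ x, Submodule.span ℂ (Set.range (ε x)) = ⊤)
    (hmean : ∀ x (e : E x), e ≠ 0 → 0 < ∑ i, R x (ε x i) e) :
    ∀ p : ℕ, 1 ≤ p → BCpPos R p :=
  stmt2_general R n ε hmean
end

section
/- Let (X,g) be a Kähler manifold and fix real numbers a, b and an integer k ≥ 2. If Sca_{a,b,k-1}(x, Σ') ≥ 0 for every (k−1)-dimensional subspace Σ' of T_{X,x}, then Sca_{a,b,k}(x, Σ) ≥ 0 for every k-dimensional subspace Σ of T_{X,x}. Indeed, Sca_{a,b,k}(x,Σ) equals the average over unit vectors v ∈ Σ of Sca_{a,b,k-1}(x, Σ_v), where Σ_v is the orthogonal complement of v inside Σ. -/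
open Complex

/- STATEMENT 4: for a Kähler curvature tensor at a point, nonnegativity of
`Sca_{a,b,k-1}` on all `(k-1)`-dimensional subspaces implies nonnegativity of
`Sca_{a,b,k}` on all `k`-dimensional subspaces.

The tangent space at the point is modelled as `ℂⁿ` and the Kähler curvature tensor by
its components `R i j k l = R(e_i, ē_j, e_k, ē_l)` in a fixed unitary basis;
a subspace is encoded through an orthonormal family spanning it. -/

/-- The quartic curvature expression `R(u, ū, w, w̄)` from the components. -/
noncomputable def quart (n : ℕ) (R : Fin n → Fin n → Fin n → Fin n → ℂ)
    (u w : EuclideanSpace ℂ (Fin n)) : ℂ :=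
  ∑ i, ∑ j, ∑ k, ∑ l,
    u i * (starRingEnd ℂ) (u j) * w k * (starRingEnd ℂ) (w l) * R i j k l

/-- The Ricci curvature `Ric(u, ū)`. -/
noncomputable def ricQ (n : ℕ) (R : Fin n → Fin n → Fin n → Fin n → ℂ)
    (u : EuclideanSpace ℂ (Fin n)) : ℂ :=
  ∑ m, quart n R u (EuclideanSpace.single m (1 : ℂ))

/-- `Sca_{a,b,m}` along the span of an orthonormal family `e : Fin m → ℂⁿ`. -/
noncomputable def Sca (n : ℕ) (R : Fin n → Fin n → Fin n → Fin n → ℂ) (a b : ℝ)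
    (m : ℕ) (e : Fin m → EuclideanSpace ℂ (Fin n)) : ℝ :=
  (a / m) * ∑ i, (ricQ n R (e i)).re
    + (2 * b / (m * (m + 1))) * ∑ i, ∑ j, (quart n R (e i) (e j)).re

open Finset

namespace S4



lemma pull1 {α β M : Type*} [Fintype α] [Fintype β] [AddCommMonoid M] (f : α → β → M) :
    ∑ i : α, ∑ m : β, f i m = ∑ m, ∑ i, f i m := Finset.sum_comm

lemma pull2 {α β M : Type*} [Fintype α] [Fintype β] [AddCommMonoid M] (f : α → α → β → M) :
    ∑ i : α, ∑ j : α, ∑ m : β, f i j m = ∑ m, ∑ i, ∑ j, f i j m := by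
  calc ∑ i : α, ∑ j : α, ∑ m : β, f i j m
      = ∑ i : α, ∑ m : β, ∑ j : α, f i j m :=
        Finset.sum_congr rfl fun _ _ => Finset.sum_comm
    _ = ∑ m, ∑ i, ∑ j, f i j m := Finset.sum_comm

lemma pull3 {α β M : Type*} [Fintype α] [Fintype β] [AddCommMonoid M] (f : α → α → α → β → M) :
    ∑ i : α, ∑ j : α, ∑ k : α, ∑ m : β, f i j k m = ∑ m, ∑ i, ∑ j, ∑ k, f i j k m := by
  calc ∑ i : α, ∑ j : α, ∑ k : α, ∑ m : β, f i j k m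
      = ∑ i : α, ∑ m : β, ∑ j : α, ∑ k : α, f i j k m :=
        Finset.sum_congr rfl fun _ _ => pull2 _
    _ = ∑ m, ∑ i, ∑ j, ∑ k, f i j k m := Finset.sum_comm

lemma pull4 {α β M : Type*} [Fintype α] [Fintype β] [AddCommMonoid M] (f : α → α → α → α → β → M) :
    ∑ i : α, ∑ j : α, ∑ k : α, ∑ l : α, ∑ m : β, f i j k l m
      = ∑ m, ∑ i, ∑ j, ∑ k, ∑ l, f i j k l m := by
  calc ∑ i : α, ∑ j : α, ∑ k : α, ∑ l : α, ∑ m : β, f i j k l m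
      = ∑ i : α, ∑ m : β, ∑ j : α, ∑ k : α, ∑ l : α, f i j k l m :=
        Finset.sum_congr rfl fun _ _ => pull3 _
    _ = _ := Finset.sum_comm

variable {n : ℕ} (R : Fin n → Fin n → Fin n → Fin n → ℂ)

noncomputable def quart4 (u v w x : Fin n → ℂ) : ℂ :=
  ∑ i, ∑ j, ∑ k, ∑ l, u i * (starRingEnd ℂ) (v j) * w k * (starRingEnd ℂ) (x l) * R i j k l

lemma quart_eq_quart4 (u w : EuclideanSpace ℂ (Fin n)) : quart n R u w = quart4 R u u w w := rfl

variable {K : ℕ}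

lemma quart4_slot1 (c : Fin K → ℂ) (v : Fin K → Fin n → ℂ) (x y z : Fin n → ℂ) :
    quart4 R (fun α => ∑ m, c m * v m α) x y z = ∑ m, c m * quart4 R (v m) x y z := by
  unfold quart4
  simp only [Finset.sum_mul, Finset.mul_sum]
  rw [pull4]
  exact Finset.sum_congr rfl fun m _ => Finset.sum_congr rfl fun i _ =>
    Finset.sum_congr rfl fun j _ => Finset.sum_congr rfl fun k _ =>
    Finset.sum_congr rfl fun l _ => by ring

lemma quart4_slot2 (c : Fin K → ℂ) (v : Fin K → Fin n → ℂ) (x y z : Fin n → ℂ) :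
    quart4 R x (fun α => ∑ m, c m * v m α) y z
      = ∑ m, (starRingEnd ℂ) (c m) * quart4 R x (v m) y z := by
  unfold quart4
  simp only [map_sum, map_mul, Finset.sum_mul, Finset.mul_sum]
  rw [pull4]
  exact Finset.sum_congr rfl fun m _ => Finset.sum_congr rfl fun i _ =>
    Finset.sum_congr rfl fun j _ => Finset.sum_congr rfl fun k _ =>
    Finset.sum_congr rfl fun l _ => by ring

lemma quart4_slot3 (c : Fin K → ℂ) (v : Fin K → Fin n → ℂ) (x y z : Fin n → ℂ) :
    quart4 R x y (fun α => ∑ m, c m * v m α) z = ∑ m, c m * quart4 R x y (v m) z := by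
  unfold quart4
  simp only [Finset.sum_mul, Finset.mul_sum]
  rw [pull4]
  exact Finset.sum_congr rfl fun m _ => Finset.sum_congr rfl fun i _ =>
    Finset.sum_congr rfl fun j _ => Finset.sum_congr rfl fun k _ =>
    Finset.sum_congr rfl fun l _ => by ring

lemma quart4_slot4 (c : Fin K → ℂ) (v : Fin K → Fin n → ℂ) (x y z : Fin n → ℂ) :
    quart4 R x y z (fun α => ∑ m, c m * v m α)
      = ∑ m, (starRingEnd ℂ) (c m) * quart4 R x y z (v m) := by
  unfold quart4
  simp only [map_sum, map_mul, Finset.sum_mul, Finset.mul_sum]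
  rw [pull4]
  exact Finset.sum_congr rfl fun m _ => Finset.sum_congr rfl fun i _ =>
    Finset.sum_congr rfl fun j _ => Finset.sum_congr rfl fun k _ =>
    Finset.sum_congr rfl fun l _ => by ring



variable {n : ℕ} (R : Fin n → Fin n → Fin n → Fin n → ℂ)

-- symmetry swapping slots 1 and 3 (uses first Kähler symmetry)
lemma quart4_swap13 (hkah1 : ∀ i j p q, R i j p q = R p j i q) (u v w x : Fin n → ℂ) :
    quart4 R u v w x = quart4 R w v u x := by
  unfold quart4
  have h : ∀ i k : Fin n, ∑ j, ∑ l, u i * (starRingEnd ℂ) (v j) * w k * (starRingEnd ℂ) (x l) * R i j k l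
      = ∑ j, ∑ l, w k * (starRingEnd ℂ) (v j) * u i * (starRingEnd ℂ) (x l) * R k j i l := by
    intro i k
    refine Finset.sum_congr rfl fun j _ => Finset.sum_congr rfl fun l _ => ?_
    rw [hkah1 i j k l]; ring
  calc ∑ i, ∑ j, ∑ k, ∑ l, u i * (starRingEnd ℂ) (v j) * w k * (starRingEnd ℂ) (x l) * R i j k l
      = ∑ i, ∑ k, ∑ j, ∑ l, u i * (starRingEnd ℂ) (v j) * w k * (starRingEnd ℂ) (x l) * R i j k l := by
        exact Finset.sum_congr rfl fun i _ => Finset.sum_comm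
    _ = ∑ i, ∑ k, ∑ j, ∑ l, w k * (starRingEnd ℂ) (v j) * u i * (starRingEnd ℂ) (x l) * R k j i l := by
        exact Finset.sum_congr rfl fun i _ => Finset.sum_congr rfl fun k _ => h i k
    _ = ∑ k, ∑ i, ∑ j, ∑ l, w k * (starRingEnd ℂ) (v j) * u i * (starRingEnd ℂ) (x l) * R k j i l :=
        Finset.sum_comm
    _ = ∑ i, ∑ j, ∑ k, ∑ l, w i * (starRingEnd ℂ) (v j) * u k * (starRingEnd ℂ) (x l) * R i j k l := by
        exact Finset.sum_congr rfl fun i _ => Finset.sum_comm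



variable {K : ℕ}

/-- Ricci pairing of two basis vectors. -/
noncomputable def ricP (e : Fin K → (Fin n → ℂ)) (j l : Fin K) : ℂ :=
  ∑ m, quart4 R (e j) (e l) (EuclideanSpace.single m (1:ℂ)) (EuclideanSpace.single m (1:ℂ))

lemma ricP_diag (e : Fin K → EuclideanSpace ℂ (Fin n)) (j : Fin K) :
    ricP R (fun i => e i) j j = ricQ n R (e j) := rfl

lemma ricQ_combo (e : Fin K → (Fin n → ℂ)) (c : Fin K → ℂ) :
    ricQ n R (WithLp.toLp 2 (fun α => ∑ j, c j * e j α))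
      = ∑ j, ∑ l, (c j * (starRingEnd ℂ) (c l)) * ricP R e j l := by
  unfold ricQ
  calc ∑ m, quart n R (WithLp.toLp 2 (fun α => ∑ j, c j * e j α)) (EuclideanSpace.single m 1)
      = ∑ m, ∑ j, c j * ∑ l, (starRingEnd ℂ) (c l) *
          quart4 R (e j) (e l) (EuclideanSpace.single m (1:ℂ)) (EuclideanSpace.single m (1:ℂ)) := by
        refine Finset.sum_congr rfl fun m _ => ?_
        rw [show quart n R (WithLp.toLp 2 (fun α => ∑ j, c j * e j α)) (EuclideanSpace.single m 1)
            = quart4 R (fun α => ∑ j, c j * e j α) (fun α => ∑ j, c j * e j α)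
              (EuclideanSpace.single m (1:ℂ)) (EuclideanSpace.single m (1:ℂ)) from rfl,
          quart4_slot1]
        exact Finset.sum_congr rfl fun j _ => by rw [quart4_slot2]
    _ = ∑ m, ∑ j, ∑ l, (c j * (starRingEnd ℂ) (c l)) *
          quart4 R (e j) (e l) (EuclideanSpace.single m (1:ℂ)) (EuclideanSpace.single m (1:ℂ)) := by
        refine Finset.sum_congr rfl fun m _ => Finset.sum_congr rfl fun j _ => ?_
        rw [Finset.mul_sum]
        exact Finset.sum_congr rfl fun l _ => by ring
    _ = ∑ j, ∑ l, ∑ m, (c j * (starRingEnd ℂ) (c l)) *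
          quart4 R (e j) (e l) (EuclideanSpace.single m (1:ℂ)) (EuclideanSpace.single m (1:ℂ)) :=
        (pull2 _).symm
    _ = ∑ j, ∑ l, (c j * (starRingEnd ℂ) (c l)) * ricP R e j l := by
        refine Finset.sum_congr rfl fun j _ => Finset.sum_congr rfl fun l _ => ?_
        rw [ricP, Finset.mul_sum]

lemma quart_combo (e : Fin K → (Fin n → ℂ)) (c d : Fin K → ℂ) :
    quart n R (WithLp.toLp 2 (fun α => ∑ j, c j * e j α)) (WithLp.toLp 2 (fun α => ∑ j, d j * e j α))
      = ∑ j, ∑ l, (c j * (starRingEnd ℂ) (c l)) *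
          ∑ p, ∑ q, (d p * (starRingEnd ℂ) (d q)) * quart4 R (e j) (e l) (e p) (e q) := by
  rw [show quart n R (WithLp.toLp 2 (fun α => ∑ j, c j * e j α)) (WithLp.toLp 2 (fun α => ∑ j, d j * e j α))
      = quart4 R (fun α => ∑ j, c j * e j α) (fun α => ∑ j, c j * e j α)
        (fun α => ∑ j, d j * e j α) (fun α => ∑ j, d j * e j α) from rfl,
    quart4_slot1]
  have step : ∀ j, quart4 R (e j) (fun α => ∑ m, c m * e m α)
        (fun α => ∑ m, d m * e m α) (fun α => ∑ m, d m * e m α)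
      = ∑ l, (starRingEnd ℂ) (c l) * ∑ p, d p * ∑ q, (starRingEnd ℂ) (d q) *
          quart4 R (e j) (e l) (e p) (e q) := by
    intro j
    rw [quart4_slot2]
    refine Finset.sum_congr rfl fun l _ => congrArg _ ?_
    rw [quart4_slot3]
    refine Finset.sum_congr rfl fun p _ => congrArg _ ?_
    rw [quart4_slot4]
  simp only [step, Finset.mul_sum]
  refine Finset.sum_congr rfl fun j _ => Finset.sum_congr rfl fun l _ =>
    Finset.sum_congr rfl fun p _ => Finset.sum_congr rfl fun q _ => by ring

lemma inner_eq (x y : EuclideanSpace ℂ (Fin n)) :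
    (inner ℂ x y : ℂ) = ∑ α, (starRingEnd ℂ) (x α) * y α := by
  rw [PiLp.inner_apply]
  exact Finset.sum_congr rfl fun α _ => by rw [RCLike.inner_apply']

set_option maxHeartbeats 1000000 in
lemma inner_combo (e : Fin K → EuclideanSpace ℂ (Fin n)) (c d : Fin K → ℂ) :
    (@inner ℂ (EuclideanSpace ℂ (Fin n)) _ (WithLp.toLp 2 (fun α => ∑ j, c j * e j α))
      (WithLp.toLp 2 (fun α => ∑ j, d j * e j α)))
      = ∑ j, ∑ l, (starRingEnd ℂ) (c j) * d l * (inner ℂ (e j) (e l) : ℂ) := by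
  rw [inner_eq]
  calc ∑ α, (starRingEnd ℂ) (∑ j, c j * e j α) * (∑ l, d l * e l α)
      = ∑ α, ∑ j, ∑ l, (starRingEnd ℂ) (c j) * d l * ((starRingEnd ℂ) (e j α) * e l α) := by
        refine Finset.sum_congr rfl fun α _ => ?_
        rw [map_sum, Finset.sum_mul_sum]
        exact Finset.sum_congr rfl fun j _ => Finset.sum_congr rfl fun l _ => by
          rw [map_mul]; ring
    _ = ∑ j, ∑ l, ∑ α, (starRingEnd ℂ) (c j) * d l * ((starRingEnd ℂ) (e j α) * e l α) := (pull2 _).symm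
    _ = ∑ j, ∑ l, (starRingEnd ℂ) (c j) * d l * (inner ℂ (e j) (e l) : ℂ) := by
        refine Finset.sum_congr rfl fun j _ => Finset.sum_congr rfl fun l _ => ?_
        rw [inner_eq, Finset.mul_sum]




noncomputable def ph (c : Fin 4) : ℂ := Complex.I ^ (c : ℕ)

lemma ph_mul_conj (c : Fin 4) : ph c * (starRingEnd ℂ) (ph c) = 1 := by
  unfold ph
  rw [map_pow, Complex.conj_I, ← mul_pow]
  simp [Complex.I_mul_I]

lemma conj_ph_mul (c : Fin 4) : (starRingEnd ℂ) (ph c) * ph c = 1 := by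
  rw [mul_comm]; exact ph_mul_conj c

lemma sum_ph : ∑ c : Fin 4, ph c = 0 := by
  rw [Fin.sum_univ_four]
  show Complex.I ^ ((0:Fin 4):ℕ) + Complex.I ^ ((1:Fin 4):ℕ) + Complex.I ^ ((2:Fin 4):ℕ)
      + Complex.I ^ ((3:Fin 4):ℕ) = 0
  show Complex.I ^ 0 + Complex.I ^ 1 + Complex.I ^ 2 + Complex.I ^ 3 = 0
  have h3 : Complex.I ^ 3 = -Complex.I := by rw [pow_succ, Complex.I_sq]; ring
  rw [h3, Complex.I_sq]; ring

lemma sum_conj_ph : ∑ c : Fin 4, (starRingEnd ℂ) (ph c) = 0 := by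
  rw [← map_sum, sum_ph, map_zero]

lemma sum_ph_sq : ∑ c : Fin 4, ph c * ph c = 0 := by
  rw [Fin.sum_univ_four]
  show Complex.I ^ ((0:Fin 4):ℕ) * Complex.I ^ ((0:Fin 4):ℕ)
      + Complex.I ^ ((1:Fin 4):ℕ) * Complex.I ^ ((1:Fin 4):ℕ)
      + Complex.I ^ ((2:Fin 4):ℕ) * Complex.I ^ ((2:Fin 4):ℕ)
      + Complex.I ^ ((3:Fin 4):ℕ) * Complex.I ^ ((3:Fin 4):ℕ) = 0
  show Complex.I ^ 0 * Complex.I ^ 0 + Complex.I ^ 1 * Complex.I ^ 1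
      + Complex.I ^ 2 * Complex.I ^ 2 + Complex.I ^ 3 * Complex.I ^ 3 = 0
  have h3 : Complex.I ^ 3 = -Complex.I := by rw [pow_succ, Complex.I_sq]; ring
  rw [h3, Complex.I_sq]
  ring_nf
  rw [Complex.I_sq]
  ring

lemma sum_conj_ph_sq : ∑ c : Fin 4, (starRingEnd ℂ) (ph c) * (starRingEnd ℂ) (ph c) = 0 := by
  have := congrArg (starRingEnd ℂ) sum_ph_sq
  rw [map_sum, map_zero] at this
  simpa [map_mul] using this

lemma sum_one_fin4 : ∑ _c : Fin 4, (1:ℂ) = 4 := by simp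


lemma zsum (A B : ℕ) (hA : A ≤ 2) (hB : B ≤ 2) :
    ∑ c : Fin 4, ph c ^ A * (starRingEnd ℂ) (ph c) ^ B
      = if A = B then (4 : ℂ) else 0 := by
  interval_cases A <;> interval_cases B <;>
    simp only [pow_zero, pow_one, pow_two, one_mul, mul_one] <;> norm_num
  · exact sum_conj_ph
  · exact sum_conj_ph_sq
  · exact sum_ph
  · calc ∑ c : Fin 4, ph c * (starRingEnd ℂ) (ph c) = ∑ _c : Fin 4, (1:ℂ) :=
        Finset.sum_congr rfl fun c _ => ph_mul_conj c
      _ = 4 := by simp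
  · calc ∑ c : Fin 4, ph c * ((starRingEnd ℂ) (ph c) * (starRingEnd ℂ) (ph c))
        = ∑ c : Fin 4, (starRingEnd ℂ) (ph c) :=
        Finset.sum_congr rfl fun c _ => by
          rw [← mul_assoc, ph_mul_conj, one_mul]
      _ = 0 := sum_conj_ph
  · exact sum_ph_sq
  · calc ∑ c : Fin 4, ph c * ph c * (starRingEnd ℂ) (ph c)
        = ∑ c : Fin 4, ph c := Finset.sum_congr rfl fun c _ => by
          rw [mul_assoc, ph_mul_conj, mul_one]
      _ = 0 := sum_ph
  · calc ∑ c : Fin 4, ph c * ph c * ((starRingEnd ℂ) (ph c) * (starRingEnd ℂ) (ph c))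
        = ∑ _c : Fin 4, (1:ℂ) := Finset.sum_congr rfl fun c _ => by
          calc ph c * ph c * ((starRingEnd ℂ) (ph c) * (starRingEnd ℂ) (ph c))
              = (ph c * (starRingEnd ℂ) (ph c)) * (ph c * (starRingEnd ℂ) (ph c)) := by ring
            _ = 1 := by rw [ph_mul_conj]; ring
      _ = 4 := by simp


lemma pattern_of_all {α : Type*} [DecidableEq α] {j l p q : α}
    (h : ∀ m : α, ((if m = j then 1 else 0) + (if m = p then 1 else 0) : ℕ)
      = (if m = l then 1 else 0) + (if m = q then 1 else 0)) :
    (j = l ∧ p = q) ∨ (j = q ∧ p = l) := by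
  have hj := h j
  have hp := h p
  simp only [if_pos rfl] at hj hp
  by_cases h1 : j = l <;> by_cases h2 : j = q <;> by_cases h3 : p = l <;> by_cases h4 : p = q <;>
    first
      | exact Or.inl ⟨by assumption, by assumption⟩
      | exact Or.inr ⟨by assumption, by assumption⟩
      | (exfalso; clear h; split_ifs at hj hp <;> first | omega | (subst_vars; simp_all))

lemma mom2 {K : ℕ} (j l : Fin K) :
    ∑ χ : Fin K → Fin 4, ph (χ j) * (starRingEnd ℂ) (ph (χ l))
      = if j = l then (4:ℂ)^K else 0 := by
  calc ∑ χ : Fin K → Fin 4, ph (χ j) * (starRingEnd ℂ) (ph (χ l))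
      = ∑ χ : Fin K → Fin 4, ∏ m, ((if m = j then ph (χ m) else 1) *
          (if m = l then (starRingEnd ℂ) (ph (χ m)) else 1)) := by
        refine Finset.sum_congr rfl fun χ _ => ?_
        rw [Finset.prod_mul_distrib, Finset.prod_ite_eq', Finset.prod_ite_eq']
        simp
    _ = ∏ m, ∑ c : Fin 4, ((if m = j then ph c else 1) *
          (if m = l then (starRingEnd ℂ) (ph c) else 1)) := by
        rw [Finset.prod_univ_sum, Fintype.piFinset_univ]
    _ = if j = l then (4:ℂ)^K else 0 := by
        have hfac : ∀ m : Fin K, (∑ c : Fin 4, ((if m = j then ph c else 1) *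
            (if m = l then (starRingEnd ℂ) (ph c) else 1)))
            = if ((if m = j then 1 else 0) = ((if m = l then 1 else 0) : ℕ)) then 4 else 0 := by
          intro m
          have e1 : ∀ c, ((if m = j then ph c else 1) * (if m = l then (starRingEnd ℂ) (ph c) else 1))
              = ph c ^ (if m = j then 1 else 0) * (starRingEnd ℂ) (ph c) ^ (if m = l then 1 else 0) := by
            intro c; split_ifs <;> simp
          rw [Finset.sum_congr rfl fun c _ => e1 c, zsum] <;> split_ifs <;> omega
        rw [Finset.prod_congr rfl fun m _ => hfac m]
        by_cases hjl : j = l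
        · subst hjl
          rw [if_pos rfl]
          rw [Finset.prod_congr rfl fun m (_ : m ∈ univ) => if_pos rfl]
          simp
        · rw [if_neg hjl]
          refine Finset.prod_eq_zero (Finset.mem_univ j) ?_
          rw [if_neg]
          simp [hjl]

lemma mom4 {K : ℕ} (j l p q : Fin K) :
    ∑ χ : Fin K → Fin 4, ph (χ j) * (starRingEnd ℂ) (ph (χ l)) * ph (χ p) *
        (starRingEnd ℂ) (ph (χ q))
      = if ((j = l ∧ p = q) ∨ (j = q ∧ p = l)) then (4:ℂ)^K else 0 := by
  calc ∑ χ : Fin K → Fin 4, ph (χ j) * (starRingEnd ℂ) (ph (χ l)) * ph (χ p) *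
        (starRingEnd ℂ) (ph (χ q))
      = ∑ χ : Fin K → Fin 4, ∏ m, ((if m = j then ph (χ m) else 1) *
          (if m = l then (starRingEnd ℂ) (ph (χ m)) else 1) *
          (if m = p then ph (χ m) else 1) *
          (if m = q then (starRingEnd ℂ) (ph (χ m)) else 1)) := by
        refine Finset.sum_congr rfl fun χ _ => ?_
        rw [Finset.prod_mul_distrib, Finset.prod_mul_distrib, Finset.prod_mul_distrib,
          Finset.prod_ite_eq', Finset.prod_ite_eq', Finset.prod_ite_eq', Finset.prod_ite_eq']
        simp
    _ = ∏ m, ∑ c : Fin 4, ((if m = j then ph c else 1) *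
          (if m = l then (starRingEnd ℂ) (ph c) else 1) *
          (if m = p then ph c else 1) *
          (if m = q then (starRingEnd ℂ) (ph c) else 1)) := by
        rw [Finset.prod_univ_sum, Fintype.piFinset_univ]
    _ = if ((j = l ∧ p = q) ∨ (j = q ∧ p = l)) then (4:ℂ)^K else 0 := by
        have hfac : ∀ m : Fin K, (∑ c : Fin 4, ((if m = j then ph c else 1) *
            (if m = l then (starRingEnd ℂ) (ph c) else 1) *
            (if m = p then ph c else 1) *
            (if m = q then (starRingEnd ℂ) (ph c) else 1)))
            = if (((if m = j then 1 else 0) + (if m = p then 1 else 0) : ℕ)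
                = (if m = l then 1 else 0) + (if m = q then 1 else 0)) then 4 else 0 := by
          intro m
          have e1 : ∀ c, ((if m = j then ph c else 1) *
              (if m = l then (starRingEnd ℂ) (ph c) else 1) *
              (if m = p then ph c else 1) *
              (if m = q then (starRingEnd ℂ) (ph c) else 1))
              = ph c ^ ((if m = j then 1 else 0) + (if m = p then 1 else 0)) *
                (starRingEnd ℂ) (ph c) ^ ((if m = l then 1 else 0) + (if m = q then 1 else 0)) := by
            intro c; split_ifs <;> simp [pow_succ] <;> ring
          rw [Finset.sum_congr rfl fun c _ => e1 c, zsum] <;> split_ifs <;> omega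
        rw [Finset.prod_congr rfl fun m _ => hfac m]
        by_cases hP : ((j = l ∧ p = q) ∨ (j = q ∧ p = l))
        · rw [if_pos hP]
          have hall : ∀ m : Fin K, (((if m = j then 1 else 0) + (if m = p then 1 else 0) : ℕ)
              = (if m = l then 1 else 0) + (if m = q then 1 else 0)) := by
            rcases hP with ⟨rfl, rfl⟩ | ⟨rfl, rfl⟩
            · intro m; rfl
            · intro m; exact Nat.add_comm _ _
          rw [Finset.prod_congr rfl fun m (_ : m ∈ univ) => if_pos (hall m)]
          simp
        · rw [if_neg hP]
          have : ¬ ∀ m : Fin K, (((if m = j then 1 else 0) + (if m = p then 1 else 0) : ℕ)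
              = (if m = l then 1 else 0) + (if m = q then 1 else 0)) :=
            fun hall => hP (pattern_of_all hall)
          push_neg at this
          obtain ⟨m, hm⟩ := this
          exact Finset.prod_eq_zero (Finset.mem_univ m) (if_neg hm)



variable {K' : ℕ}

noncomputable def sK (K' : ℕ) : ℝ := (Real.sqrt (K' + 1))⁻¹
noncomputable def wv (K' : ℕ) (j : Fin (K' + 1)) : ℝ := (if j = 0 then 1 else 0) - sK K'
noncomputable def tK (K' : ℕ) : ℝ := (1 - sK K')⁻¹
noncomputable def HM (K' : ℕ) (j a : Fin (K' + 1)) : ℝ :=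
  (if j = a then 1 else 0) - tK K' * wv K' j * wv K' a

lemma sK_pos : 0 < sK K' := by
  have h : (0:ℝ) < Real.sqrt (K' + 1) := Real.sqrt_pos.2 (by positivity)
  exact inv_pos.2 h

lemma sK_lt_one (hK : 1 ≤ K') : sK K' < 1 := by
  have h1 : (1:ℝ) < Real.sqrt (K' + 1) := by
    have h2 : (1:ℝ) < (K' : ℝ) + 1 := by
      have : (1:ℝ) ≤ (K' : ℝ) := by exact_mod_cast hK
      linarith
    calc (1:ℝ) = Real.sqrt 1 := by simp
      _ < Real.sqrt ((K':ℝ) + 1) := Real.sqrt_lt_sqrt (by norm_num) h2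
  rw [sK, inv_lt_one_iff₀]
  right; exact h1

lemma sK_sq : sK K' ^ 2 = ((K' : ℝ) + 1)⁻¹ := by
  rw [sK, inv_pow, Real.sq_sqrt (by positivity)]

lemma one_sub_sK_pos (hK : 1 ≤ K') : 0 < 1 - sK K' := by
  have := sK_lt_one (K' := K') hK; linarith

lemma tK_mul (hK : 1 ≤ K') : tK K' * (1 - sK K') = 1 := by
  rw [tK, inv_mul_cancel₀ (ne_of_gt (one_sub_sK_pos hK))]

lemma wv_zero : wv K' 0 = 1 - sK K' := by simp [wv]

lemma sum_wv_sq (hK : 1 ≤ K') : ∑ a, wv K' a ^ 2 = 2 * (1 - sK K') := by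
  have e : ∀ a : Fin (K' + 1), wv K' a ^ 2
      = (if a = 0 then (1 - sK K')^2 - sK K' ^2 else 0) + sK K' ^ 2 := by
    intro a; unfold wv; split_ifs <;> ring
  rw [Finset.sum_congr rfl fun a _ => e a, Finset.sum_add_distrib,
    Finset.sum_ite_eq' univ (0 : Fin (K'+1)), Finset.sum_const]
  have hcard : ((univ : Finset (Fin (K'+1))).card : ℝ) = (K' : ℝ) + 1 := by
    simp
  have hKs : ((K':ℝ) + 1) * sK K' ^ 2 = 1 := by
    rw [sK_sq, mul_inv_cancel₀ (by positivity)]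
  simp only [mem_univ, if_true, nsmul_eq_mul]
  rw [hcard, hKs]
  ring

lemma HM_col0 (hK : 1 ≤ K') : ∀ j, HM K' j 0 = sK K' := by
  intro j
  rw [HM, wv_zero, show tK K' * wv K' j * (1 - sK K') = (tK K' * (1 - sK K')) * wv K' j by ring,
    tK_mul hK]
  unfold wv; split_ifs <;> ring

lemma HM_orth (hK : 1 ≤ K') (j l : Fin (K' + 1)) :
    ∑ a, HM K' j a * HM K' l a = if j = l then 1 else 0 := by
  have e : ∀ a, HM K' j a * HM K' l a
      = (if j = a then (if l = a then 1 else 0) else 0)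
        - tK K' * wv K' j * ((if l = a then 1 else 0) * wv K' a)
        - tK K' * wv K' l * ((if j = a then 1 else 0) * wv K' a)
        + (tK K' * wv K' j) * (tK K' * wv K' l) * wv K' a ^ 2 := by
    intro a; unfold HM; split_ifs <;> ring
  rw [Finset.sum_congr rfl fun a _ => e a]
  simp only [Finset.sum_add_distrib, Finset.sum_sub_distrib, ← Finset.mul_sum]
  have h1 : ∑ a, (if j = a then (if l = a then 1 else 0) else (0:ℝ)) = if j = l then 1 else 0 := by
    rw [Finset.sum_ite_eq univ j (fun a => if l = a then (1:ℝ) else 0)]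
    simp only [mem_univ, if_true]
    by_cases h : j = l
    · simp [h]
    · have h' : ¬ l = j := fun e => h (Eq.symm e)
      simp [h, h']
  have h2 : ∑ a, (if l = a then 1 else (0:ℝ)) * wv K' a = wv K' l := by
    have e2 : ∀ a, (if l = a then 1 else (0:ℝ)) * wv K' a = if l = a then wv K' a else 0 := by
      intro a; split_ifs <;> ring
    rw [Finset.sum_congr rfl fun a _ => e2 a, Finset.sum_ite_eq univ l (fun a => wv K' a)]
    simp
  have h3 : ∑ a, (if j = a then 1 else (0:ℝ)) * wv K' a = wv K' j := by
    have e3 : ∀ a, (if j = a then 1 else (0:ℝ)) * wv K' a = if j = a then wv K' a else 0 := by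
      intro a; split_ifs <;> ring
    rw [Finset.sum_congr rfl fun a _ => e3 a, Finset.sum_ite_eq univ j (fun a => wv K' a)]
    simp
  rw [h1, h2, h3, sum_wv_sq hK]
  have ht := tK_mul (K' := K') hK
  have : tK K' * wv K' j * (tK K' * wv K' l) * (2 * (1 - sK K'))
      = 2 * ((tK K' * (1 - sK K')) * tK K') * wv K' j * wv K' l := by ring
  rw [this, ht]
  ring


lemma HM_symm {K' : ℕ} (j a : Fin (K' + 1)) : HM K' j a = HM K' a j := by
  unfold HM
  by_cases h : j = a
  · subst h; ring
  · have h' : ¬ a = j := fun e => h e.symm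
    rw [if_neg h, if_neg h']; ring

noncomputable def Mz (K' : ℕ) (χ : Fin (K' + 1) → Fin 4) (j a : Fin (K' + 1)) : ℂ :=
  ph (χ j) * ((HM K' j a : ℝ) : ℂ)

noncomputable def fchi (n K' : ℕ) (e : Fin (K' + 1) → EuclideanSpace ℂ (Fin n))
    (χ : Fin (K' + 1) → Fin 4) (a : Fin K') : EuclideanSpace ℂ (Fin n) :=
  WithLp.toLp 2 (fun α => ∑ j, Mz K' χ j a.succ * e j α)

lemma Mz_row {K' : ℕ} (hK : 1 ≤ K') (χ : Fin (K' + 1) → Fin 4) (j l : Fin (K' + 1)) :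
    ∑ a : Fin K', Mz K' χ j a.succ * (starRingEnd ℂ) (Mz K' χ l a.succ)
      = (if j = l then 1 else 0)
        - ph (χ j) * (starRingEnd ℂ) (ph (χ l)) * (((K' : ℝ) + 1)⁻¹ : ℝ) := by
  have hterm : ∀ c : Fin (K' + 1), Mz K' χ j c * (starRingEnd ℂ) (Mz K' χ l c)
      = ph (χ j) * (starRingEnd ℂ) (ph (χ l)) * ((HM K' j c * HM K' l c : ℝ) : ℂ) := by
    intro c
    unfold Mz
    rw [map_mul, Complex.conj_ofReal]
    push_cast
    ring
  have hfull : ∑ c : Fin (K' + 1), Mz K' χ j c * (starRingEnd ℂ) (Mz K' χ l c)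
      = if j = l then 1 else 0 := by
    rw [Finset.sum_congr rfl fun c _ => hterm c, ← Finset.mul_sum, ← Complex.ofReal_sum,
      HM_orth hK j l]
    by_cases h : j = l
    · subst h; rw [if_pos rfl, if_pos rfl]
      simp [ph_mul_conj]
    · rw [if_neg h, if_neg h]; simp
  have hsplit := Fin.sum_univ_succ
    (fun c : Fin (K' + 1) => Mz K' χ j c * (starRingEnd ℂ) (Mz K' χ l c))
  rw [hfull] at hsplit
  have h0 : Mz K' χ j 0 * (starRingEnd ℂ) (Mz K' χ l 0)
      = ph (χ j) * (starRingEnd ℂ) (ph (χ l)) * (((K' : ℝ) + 1)⁻¹ : ℝ) := by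
    rw [hterm 0, HM_col0 hK, HM_col0 hK, ← pow_two, sK_sq]
  rw [h0] at hsplit
  linear_combination -hsplit

lemma fchi_orthonormal {n K' : ℕ} (hK : 1 ≤ K') (e : Fin (K' + 1) → EuclideanSpace ℂ (Fin n))
    (he : Orthonormal ℂ e) (χ : Fin (K' + 1) → Fin 4) :
    Orthonormal ℂ (fchi n K' e χ) := by
  rw [orthonormal_iff_ite]
  intro A B
  have hee := orthonormal_iff_ite.mp he
  have h1 : (inner ℂ (fchi n K' e χ A) (fchi n K' e χ B) : ℂ)
      = ∑ j, ∑ l, (starRingEnd ℂ) (Mz K' χ j A.succ) * Mz K' χ l B.succ *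
          (inner ℂ (e j) (e l) : ℂ) :=
    inner_combo e (fun j => Mz K' χ j A.succ) (fun j => Mz K' χ j B.succ)
  rw [h1]
  have h2 : ∀ j l : Fin (K' + 1), (starRingEnd ℂ) (Mz K' χ j A.succ) * Mz K' χ l B.succ *
      (inner ℂ (e j) (e l) : ℂ)
      = if j = l then (starRingEnd ℂ) (Mz K' χ j A.succ) * Mz K' χ j B.succ else 0 := by
    intro j l
    rw [hee j l]
    split_ifs with h
    · subst h; ring
    · ring
  rw [Finset.sum_congr rfl fun j _ => Finset.sum_congr rfl fun l _ => h2 j l]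
  have h3 : ∀ j : Fin (K' + 1),
      (∑ l, if j = l then (starRingEnd ℂ) (Mz K' χ j A.succ) * Mz K' χ j B.succ else 0)
      = (starRingEnd ℂ) (Mz K' χ j A.succ) * Mz K' χ j B.succ := by
    intro j
    rw [Finset.sum_ite_eq univ j (fun _ => (starRingEnd ℂ) (Mz K' χ j A.succ) * Mz K' χ j B.succ)]
    simp
  rw [Finset.sum_congr rfl fun j _ => h3 j]
  have h4 : ∀ j : Fin (K' + 1), (starRingEnd ℂ) (Mz K' χ j A.succ) * Mz K' χ j B.succ
      = ((HM K' j A.succ * HM K' j B.succ : ℝ) : ℂ) := by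
    intro j
    unfold Mz
    rw [map_mul, Complex.conj_ofReal]
    calc (starRingEnd ℂ) (ph (χ j)) * (HM K' j A.succ : ℂ) * (ph (χ j) * (HM K' j B.succ : ℂ))
        = ((starRingEnd ℂ) (ph (χ j)) * ph (χ j)) * ((HM K' j A.succ : ℂ) * (HM K' j B.succ : ℂ)) := by
          ring
      _ = ((HM K' j A.succ * HM K' j B.succ : ℝ) : ℂ) := by
          rw [conj_ph_mul]; push_cast; ring
  rw [Finset.sum_congr rfl fun j _ => h4 j, ← Complex.ofReal_sum]
  have h5 : ∑ j, HM K' j A.succ * HM K' j B.succ = if A.succ = B.succ then (1:ℝ) else 0 := by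
    calc ∑ j, HM K' j A.succ * HM K' j B.succ
        = ∑ j, HM K' A.succ j * HM K' B.succ j :=
          Finset.sum_congr rfl fun j _ => by rw [HM_symm j A.succ, HM_symm j B.succ]
      _ = if A.succ = B.succ then (1:ℝ) else 0 := HM_orth hK A.succ B.succ
  rw [h5]
  by_cases h : A = B
  · rw [if_pos h, if_pos (by rw [h])]; simp
  · rw [if_neg h, if_neg (fun hs => h (Fin.succ_inj.mp hs))]; simp


section
variable {n K' : ℕ} (R : Fin n → Fin n → Fin n → Fin n → ℂ)
  (e : Fin (K' + 1) → EuclideanSpace ℂ (Fin n))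
lemma card_chi : ∑ _χ : Fin (K' + 1) → Fin 4, (1:ℂ) = (4:ℂ)^(K'+1) := by
  rw [Finset.sum_const, Finset.card_univ, Fintype.card_fun]
  simp

lemma CC1 (hK : 1 ≤ K') :
    ∑ χ : Fin (K' + 1) → Fin 4, ∑ a : Fin K', ricQ n R (fchi n K' e χ a)
      = (4:ℂ)^(K'+1) * (1 - ((((K' : ℝ) + 1)⁻¹ : ℝ) : ℂ)) * ∑ j, ricQ n R (e j) := by
  have step1 : ∀ χ, ∑ a : Fin K', ricQ n R (fchi n K' e χ a)
      = ∑ j, ∑ l, (∑ a : Fin K', Mz K' χ j a.succ * (starRingEnd ℂ) (Mz K' χ l a.succ))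
          * ricP R (fun i => e i) j l := by
    intro χ
    calc ∑ a : Fin K', ricQ n R (fchi n K' e χ a)
        = ∑ a : Fin K', ∑ j, ∑ l,
            (Mz K' χ j a.succ * (starRingEnd ℂ) (Mz K' χ l a.succ)) * ricP R (fun i => e i) j l :=
          Finset.sum_congr rfl fun a _ => ricQ_combo R (fun i => e i) (fun j => Mz K' χ j a.succ)
      _ = ∑ j, ∑ l, ∑ a : Fin K',
            (Mz K' χ j a.succ * (starRingEnd ℂ) (Mz K' χ l a.succ)) * ricP R (fun i => e i) j l :=
          (pull2 _).symm
      _ = _ := Finset.sum_congr rfl fun j _ => Finset.sum_congr rfl fun l _ =>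
          (Finset.sum_mul _ _ _).symm
  rw [Finset.sum_congr rfl fun χ _ => step1 χ, ← pull2]
  have hG : ∀ j l : Fin (K' + 1),
      ∑ χ : Fin (K' + 1) → Fin 4,
        (∑ a : Fin K', Mz K' χ j a.succ * (starRingEnd ℂ) (Mz K' χ l a.succ))
      = if j = l then (4:ℂ)^(K'+1) * (1 - ((((K' : ℝ) + 1)⁻¹ : ℝ) : ℂ)) else 0 := by
    intro j l
    rw [Finset.sum_congr rfl fun χ _ => Mz_row hK χ j l, Finset.sum_sub_distrib]
    have c1 : ∑ _χ : Fin (K' + 1) → Fin 4, (if j = l then (1:ℂ) else 0)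
        = (4:ℂ)^(K'+1) * (if j = l then (1:ℂ) else 0) := by
      rw [Finset.sum_const, Finset.card_univ, Fintype.card_fun]
      simp [mul_comm]
    have c2 : ∑ χ : Fin (K' + 1) → Fin 4,
        ph (χ j) * (starRingEnd ℂ) (ph (χ l)) * (((K' : ℝ) + 1)⁻¹ : ℝ)
        = (if j = l then (4:ℂ)^(K'+1) else 0) * (((K' : ℝ) + 1)⁻¹ : ℝ) := by
      rw [← Finset.sum_mul, mom2]
    rw [c1, c2]
    split_ifs <;> ring
  calc ∑ j, ∑ l, ∑ χ : Fin (K' + 1) → Fin 4,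
        (∑ a : Fin K', Mz K' χ j a.succ * (starRingEnd ℂ) (Mz K' χ l a.succ)) * ricP R (fun i => e i) j l
      = ∑ j, ∑ l, (if j = l then (4:ℂ)^(K'+1) * (1 - ((((K' : ℝ) + 1)⁻¹ : ℝ) : ℂ)) else 0)
          * ricP R (fun i => e i) j l := by
        refine Finset.sum_congr rfl fun j _ => Finset.sum_congr rfl fun l _ => ?_
        rw [← Finset.sum_mul, hG j l]
    _ = ∑ j, (4:ℂ)^(K'+1) * (1 - ((((K' : ℝ) + 1)⁻¹ : ℝ) : ℂ)) * ricP R (fun i => e i) j j := by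
        refine Finset.sum_congr rfl fun j _ => ?_
        have : ∀ l, (if j = l then (4:ℂ)^(K'+1) * (1 - ((((K' : ℝ) + 1)⁻¹ : ℝ) : ℂ)) else 0)
            * ricP R (fun i => e i) j l
            = if j = l then (4:ℂ)^(K'+1) * (1 - ((((K' : ℝ) + 1)⁻¹ : ℝ) : ℂ)) * ricP R (fun i => e i) j l
              else 0 := by
          intro l; split_ifs <;> ring
        rw [Finset.sum_congr rfl fun l _ => this l,
          Finset.sum_ite_eq univ j (fun l => (4:ℂ)^(K'+1) * (1 - ((((K' : ℝ) + 1)⁻¹ : ℝ) : ℂ))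
            * ricP R (fun i => e i) j l)]
        simp
    _ = (4:ℂ)^(K'+1) * (1 - ((((K' : ℝ) + 1)⁻¹ : ℝ) : ℂ)) * ∑ j, ricQ n R (e j) := by
        rw [Finset.mul_sum]
        exact Finset.sum_congr rfl fun j _ => by rw [ricP_diag]

lemma CC3 : ∑ i : Fin (K' + 1), ∑ a : Fin K', ricQ n R (e (i.succAbove a))
    = (K' : ℂ) * ∑ j, ricQ n R (e j) := by
  have h1 : ∀ i : Fin (K' + 1), ∑ a : Fin K', ricQ n R (e (i.succAbove a))
      = (∑ j, ricQ n R (e j)) - ricQ n R (e i) := by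
    intro i
    have := Fin.sum_univ_succAbove (fun j => ricQ n R (e j)) i
    linear_combination -this
  rw [Finset.sum_congr rfl fun i _ => h1 i, Finset.sum_sub_distrib, Finset.sum_const,
    Finset.card_univ, Fintype.card_fin, nsmul_eq_mul]
  push_cast
  ring

lemma CC4 : ∑ i : Fin (K' + 1), ∑ a : Fin K', ∑ b : Fin K',
      quart n R (e (i.succAbove a)) (e (i.succAbove b))
    = ((K' : ℂ) + 1) * (∑ j, ∑ l, quart n R (e j) (e l))
      - 2 * (∑ j, ∑ l, quart n R (e j) (e l)) + ∑ j, quart n R (e j) (e j) := by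
  have h1 : ∀ i : Fin (K' + 1), ∑ a : Fin K', ∑ b : Fin K',
      quart n R (e (i.succAbove a)) (e (i.succAbove b))
      = (∑ j, ∑ l, quart n R (e j) (e l)) - (∑ l, quart n R (e i) (e l))
        - (∑ j, quart n R (e j) (e i)) + quart n R (e i) (e i) := by
    intro i
    have hout := Fin.sum_univ_succAbove (fun j => ∑ l, quart n R (e j) (e l)) i
    have hin : ∀ a : Fin K', ∑ l, quart n R (e (i.succAbove a)) (e l)
        = quart n R (e (i.succAbove a)) (e i)
          + ∑ b : Fin K', quart n R (e (i.succAbove a)) (e (i.succAbove b)) :=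
      fun a => Fin.sum_univ_succAbove (fun l => quart n R (e (i.succAbove a)) (e l)) i
    have hcol := Fin.sum_univ_succAbove (fun j => quart n R (e j) (e i)) i
    rw [Finset.sum_congr rfl fun a _ => hin a, Finset.sum_add_distrib] at hout
    linear_combination hcol - hout
  rw [Finset.sum_congr rfl fun i _ => h1 i]
  simp only [Finset.sum_add_distrib, Finset.sum_sub_distrib, Finset.sum_const,
    Finset.card_univ, Fintype.card_fin, nsmul_eq_mul]
  have hswap : ∑ i : Fin (K' + 1), ∑ j, quart n R (e j) (e i)
      = ∑ j, ∑ l, quart n R (e j) (e l) := Finset.sum_comm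
  rw [hswap]
  push_cast
  ring


end


section
variable {n K' : ℕ} (R : Fin n → Fin n → Fin n → Fin n → ℂ)
  (e : Fin (K' + 1) → EuclideanSpace ℂ (Fin n))

-- collapse lemmas
lemma col_a (F : Fin (K'+1) → Fin (K'+1) → Fin (K'+1) → Fin (K'+1) → ℂ) (C : ℂ) :
    ∑ j, ∑ l, ∑ p, ∑ q, (if j = l then (1:ℂ) else 0) * (if p = q then (1:ℂ) else 0) * C * F j l p q
      = C * ∑ j, ∑ p, F j j p p := by
  rw [Finset.mul_sum]
  refine Finset.sum_congr rfl fun j _ => ?_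
  have hq : ∀ l p q, (if j = l then (1:ℂ) else 0) * (if p = q then (1:ℂ) else 0) * C * F j l p q
      = if p = q then (if j = l then (1:ℂ) else 0) * C * F j l p q else 0 := by
    intro l p q; split_ifs <;> ring
  simp only [hq]
  simp only [Finset.sum_ite_eq univ, mem_univ, if_true]
  have hl : ∀ l p, (if j = l then (1:ℂ) else 0) * C * F j l p p
      = if j = l then C * F j l p p else 0 := by
    intro l p; split_ifs <;> ring
  simp only [hl]
  rw [Finset.sum_comm (f := fun l p => if j = l then C * F j l p p else 0)]
  rw [Finset.mul_sum]
  refine Finset.sum_congr rfl fun p _ => ?_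
  rw [Finset.sum_ite_eq univ j (fun l => C * F j l p p)]
  simp

lemma col_b (F : Fin (K'+1) → Fin (K'+1) → Fin (K'+1) → Fin (K'+1) → ℂ) (C : ℂ) :
    ∑ j, ∑ l, ∑ p, ∑ q, (if j = q then (1:ℂ) else 0) * (if p = l then (1:ℂ) else 0) * C * F j l p q
      = C * ∑ j, ∑ l, F j l l j := by
  rw [Finset.mul_sum]
  refine Finset.sum_congr rfl fun j _ => ?_
  rw [Finset.mul_sum]
  refine Finset.sum_congr rfl fun l _ => ?_
  have hq : ∀ p q, (if j = q then (1:ℂ) else 0) * (if p = l then (1:ℂ) else 0) * C * F j l p q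
      = if j = q then (if p = l then (1:ℂ) else 0) * C * F j l p q else 0 := by
    intro p q; split_ifs <;> ring
  simp only [hq]
  simp only [Finset.sum_ite_eq univ, mem_univ, if_true]
  have hp : ∀ p, (if p = l then (1:ℂ) else 0) * C * F j l p j
      = if p = l then C * F j l p j else 0 := by
    intro p; split_ifs <;> ring
  simp only [hp]
  rw [Finset.sum_ite_eq' univ l (fun p => C * F j l p j)]
  simp

lemma col_c (F : Fin (K'+1) → Fin (K'+1) → Fin (K'+1) → Fin (K'+1) → ℂ) (C : ℂ) :
    ∑ j, ∑ l, ∑ p, ∑ q, (if j = l then (1:ℂ) else 0) * (if l = p then (1:ℂ) else 0)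
        * (if p = q then (1:ℂ) else 0) * C * F j l p q
      = C * ∑ j, F j j j j := by
  rw [Finset.mul_sum]
  refine Finset.sum_congr rfl fun j _ => ?_
  have hq : ∀ l p q, (if j = l then (1:ℂ) else 0) * (if l = p then (1:ℂ) else 0)
        * (if p = q then (1:ℂ) else 0) * C * F j l p q
      = if p = q then (if j = l then (1:ℂ) else 0) * (if l = p then (1:ℂ) else 0)
          * C * F j l p q else 0 := by
    intro l p q; split_ifs <;> ring
  simp only [hq]
  simp only [Finset.sum_ite_eq univ, mem_univ, if_true]
  have hp : ∀ l p, (if j = l then (1:ℂ) else 0) * (if l = p then (1:ℂ) else 0) * C * F j l p p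
      = if l = p then (if j = l then (1:ℂ) else 0) * C * F j l p p else 0 := by
    intro l p; split_ifs <;> ring
  simp only [hp]
  simp only [Finset.sum_ite_eq univ, mem_univ, if_true]
  have hl : ∀ l, (if j = l then (1:ℂ) else 0) * C * F j l l l
      = if j = l then C * F j l l l else 0 := by
    intro l; split_ifs <;> ring
  simp only [hl]
  rw [Finset.sum_ite_eq univ j (fun l => C * F j l l l)]
  simp

lemma boole_split (P Q S T U : Prop) [Decidable P] [Decidable Q] [Decidable S] [Decidable T]
    [Decidable U] (h : (P ∧ U ∧ Q) ↔ ((P ∧ Q) ∧ (S ∧ T))) :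
    (if ((P ∧ Q) ∨ (S ∧ T)) then (1:ℂ) else 0)
      = (if P then (1:ℂ) else 0) * (if Q then (1:ℂ) else 0)
        + (if S then (1:ℂ) else 0) * (if T then (1:ℂ) else 0)
        - (if P then (1:ℂ) else 0) * (if U then (1:ℂ) else 0) * (if Q then (1:ℂ) else 0) := by
  by_cases hP : P <;> by_cases hQ : Q <;> by_cases hS : S <;> by_cases hT : T <;>
    by_cases hU : U <;> simp_all

lemma hGG {K' : ℕ} (hK : 1 ≤ K') (j l p q : Fin (K' + 1)) :
    ∑ χ : Fin (K' + 1) → Fin 4,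
        ((∑ a : Fin K', Mz K' χ j a.succ * (starRingEnd ℂ) (Mz K' χ l a.succ)) *
         (∑ a : Fin K', Mz K' χ p a.succ * (starRingEnd ℂ) (Mz K' χ q a.succ)))
      = (if j = l then (1:ℂ) else 0) * (if p = q then (1:ℂ) else 0) *
          ((4:ℂ)^(K'+1) * (1 - 2 * ((((K' : ℝ) + 1)⁻¹ : ℝ) : ℂ)))
        + (if ((j = l ∧ p = q) ∨ (j = q ∧ p = l)) then (1:ℂ) else 0) *
          ((4:ℂ)^(K'+1) * ((((K' : ℝ) + 1)⁻¹ : ℝ) : ℂ)^2) := by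
  have hx : ∀ χ : Fin (K' + 1) → Fin 4,
      ((∑ a : Fin K', Mz K' χ j a.succ * (starRingEnd ℂ) (Mz K' χ l a.succ)) *
       (∑ a : Fin K', Mz K' χ p a.succ * (starRingEnd ℂ) (Mz K' χ q a.succ)))
      = (if j = l then (1:ℂ) else 0) * (if p = q then (1:ℂ) else 0)
        - (if j = l then (1:ℂ) else 0) *
            (ph (χ p) * (starRingEnd ℂ) (ph (χ q))) * ((((K' : ℝ) + 1)⁻¹ : ℝ) : ℂ)
        - (if p = q then (1:ℂ) else 0) *
            (ph (χ j) * (starRingEnd ℂ) (ph (χ l))) * ((((K' : ℝ) + 1)⁻¹ : ℝ) : ℂ)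
        + (ph (χ j) * (starRingEnd ℂ) (ph (χ l)) * ph (χ p) * (starRingEnd ℂ) (ph (χ q)))
            * ((((K' : ℝ) + 1)⁻¹ : ℝ) : ℂ)^2 := by
    intro χ
    rw [Mz_row hK χ j l, Mz_row hK χ p q]
    ring
  rw [Finset.sum_congr rfl fun χ _ => hx χ]
  simp only [Finset.sum_add_distrib, Finset.sum_sub_distrib]
  have c0 : ∑ _χ : Fin (K' + 1) → Fin 4,
      (if j = l then (1:ℂ) else 0) * (if p = q then (1:ℂ) else 0)
      = (4:ℂ)^(K'+1) * ((if j = l then (1:ℂ) else 0) * (if p = q then (1:ℂ) else 0)) := by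
    rw [Finset.sum_const, Finset.card_univ, Fintype.card_fun]
    simp [mul_comm]
  have c1 : ∑ χ : Fin (K' + 1) → Fin 4, (if j = l then (1:ℂ) else 0) *
        (ph (χ p) * (starRingEnd ℂ) (ph (χ q))) * ((((K' : ℝ) + 1)⁻¹ : ℝ) : ℂ)
      = (if j = l then (1:ℂ) else 0) * (if p = q then (4:ℂ)^(K'+1) else 0)
          * ((((K' : ℝ) + 1)⁻¹ : ℝ) : ℂ) := by
    calc ∑ χ : Fin (K' + 1) → Fin 4, (if j = l then (1:ℂ) else 0) *
          (ph (χ p) * (starRingEnd ℂ) (ph (χ q))) * ((((K' : ℝ) + 1)⁻¹ : ℝ) : ℂ)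
        = (if j = l then (1:ℂ) else 0) * (∑ χ : Fin (K' + 1) → Fin 4,
            ph (χ p) * (starRingEnd ℂ) (ph (χ q))) * ((((K' : ℝ) + 1)⁻¹ : ℝ) : ℂ) := by
          rw [Finset.mul_sum, Finset.sum_mul]
      _ = _ := by rw [mom2]
  have c2 : ∑ χ : Fin (K' + 1) → Fin 4, (if p = q then (1:ℂ) else 0) *
        (ph (χ j) * (starRingEnd ℂ) (ph (χ l))) * ((((K' : ℝ) + 1)⁻¹ : ℝ) : ℂ)
      = (if p = q then (1:ℂ) else 0) * (if j = l then (4:ℂ)^(K'+1) else 0)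
          * ((((K' : ℝ) + 1)⁻¹ : ℝ) : ℂ) := by
    calc ∑ χ : Fin (K' + 1) → Fin 4, (if p = q then (1:ℂ) else 0) *
          (ph (χ j) * (starRingEnd ℂ) (ph (χ l))) * ((((K' : ℝ) + 1)⁻¹ : ℝ) : ℂ)
        = (if p = q then (1:ℂ) else 0) * (∑ χ : Fin (K' + 1) → Fin 4,
            ph (χ j) * (starRingEnd ℂ) (ph (χ l))) * ((((K' : ℝ) + 1)⁻¹ : ℝ) : ℂ) := by
          rw [Finset.mul_sum, Finset.sum_mul]
      _ = _ := by rw [mom2]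
  have c3 : ∑ χ : Fin (K' + 1) → Fin 4,
        (ph (χ j) * (starRingEnd ℂ) (ph (χ l)) * ph (χ p) * (starRingEnd ℂ) (ph (χ q)))
          * ((((K' : ℝ) + 1)⁻¹ : ℝ) : ℂ)^2
      = (if ((j = l ∧ p = q) ∨ (j = q ∧ p = l)) then (4:ℂ)^(K'+1) else 0)
          * ((((K' : ℝ) + 1)⁻¹ : ℝ) : ℂ)^2 := by
    rw [← Finset.sum_mul, mom4]
  rw [c0, c1, c2, c3]
  split_ifs <;> ring

lemma CC2 (hK : 1 ≤ K') (hkah1 : ∀ i j p q, R i j p q = R p j i q) :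
    ∑ χ : Fin (K' + 1) → Fin 4, ∑ A : Fin K', ∑ B : Fin K',
        quart n R (fchi n K' e χ A) (fchi n K' e χ B)
      = ((4:ℂ)^(K'+1) * (1 - 2 * ((((K' : ℝ) + 1)⁻¹ : ℝ) : ℂ))
            + (4:ℂ)^(K'+1) * ((((K' : ℝ) + 1)⁻¹ : ℝ) : ℂ)^2)
          * (∑ j, ∑ l, quart n R (e j) (e l))
        + ((4:ℂ)^(K'+1) * ((((K' : ℝ) + 1)⁻¹ : ℝ) : ℂ)^2)
          * (∑ j, ∑ l, quart n R (e j) (e l))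
        - ((4:ℂ)^(K'+1) * ((((K' : ℝ) + 1)⁻¹ : ℝ) : ℂ)^2)
          * (∑ j, quart n R (e j) (e j)) := by
  set iv : ℂ := ((((K' : ℝ) + 1)⁻¹ : ℝ) : ℂ) with hiv
  have step1 : ∀ χ : Fin (K' + 1) → Fin 4, ∑ A : Fin K', ∑ B : Fin K',
      quart n R (fchi n K' e χ A) (fchi n K' e χ B)
      = ∑ j, ∑ l, (∑ a : Fin K', Mz K' χ j a.succ * (starRingEnd ℂ) (Mz K' χ l a.succ)) *
          ∑ p, ∑ q, (∑ a : Fin K', Mz K' χ p a.succ * (starRingEnd ℂ) (Mz K' χ q a.succ)) *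
            quart4 R (e j) (e l) (e p) (e q) := by
    intro χ
    calc ∑ A : Fin K', ∑ B : Fin K', quart n R (fchi n K' e χ A) (fchi n K' e χ B)
        = ∑ A : Fin K', ∑ B : Fin K', ∑ j, ∑ l,
            (Mz K' χ j A.succ * (starRingEnd ℂ) (Mz K' χ l A.succ)) *
            ∑ p, ∑ q, (Mz K' χ p B.succ * (starRingEnd ℂ) (Mz K' χ q B.succ)) *
              quart4 R (e j) (e l) (e p) (e q) :=
          Finset.sum_congr rfl fun A _ => Finset.sum_congr rfl fun B _ =>
            quart_combo R (fun i => e i) (fun j => Mz K' χ j A.succ) (fun j => Mz K' χ j B.succ)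
      _ = ∑ A : Fin K', ∑ j, ∑ l,
            (Mz K' χ j A.succ * (starRingEnd ℂ) (Mz K' χ l A.succ)) *
            ∑ p, ∑ q, (∑ B : Fin K', Mz K' χ p B.succ * (starRingEnd ℂ) (Mz K' χ q B.succ)) *
              quart4 R (e j) (e l) (e p) (e q) := by
          refine Finset.sum_congr rfl fun A _ => ?_
          rw [← pull2]
          refine Finset.sum_congr rfl fun j _ => Finset.sum_congr rfl fun l _ => ?_
          rw [← Finset.mul_sum]
          congr 1
          rw [← pull2]
          exact Finset.sum_congr rfl fun p _ => Finset.sum_congr rfl fun q _ =>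
            (Finset.sum_mul _ _ _).symm
      _ = _ := by
          rw [← pull2]
          exact Finset.sum_congr rfl fun j _ => Finset.sum_congr rfl fun l _ =>
            (Finset.sum_mul _ _ _).symm
  rw [Finset.sum_congr rfl fun χ _ => step1 χ, ← pull2]
  have step2 : ∀ j l : Fin (K' + 1), ∑ χ : Fin (K' + 1) → Fin 4,
      (∑ a : Fin K', Mz K' χ j a.succ * (starRingEnd ℂ) (Mz K' χ l a.succ)) *
        ∑ p, ∑ q, (∑ a : Fin K', Mz K' χ p a.succ * (starRingEnd ℂ) (Mz K' χ q a.succ)) *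
          quart4 R (e j) (e l) (e p) (e q)
      = ∑ p, ∑ q, (∑ χ : Fin (K' + 1) → Fin 4,
          ((∑ a : Fin K', Mz K' χ j a.succ * (starRingEnd ℂ) (Mz K' χ l a.succ)) *
           (∑ a : Fin K', Mz K' χ p a.succ * (starRingEnd ℂ) (Mz K' χ q a.succ)))) *
            quart4 R (e j) (e l) (e p) (e q) := by
    intro j l
    calc ∑ χ : Fin (K' + 1) → Fin 4,
        (∑ a : Fin K', Mz K' χ j a.succ * (starRingEnd ℂ) (Mz K' χ l a.succ)) *
          ∑ p, ∑ q, (∑ a : Fin K', Mz K' χ p a.succ * (starRingEnd ℂ) (Mz K' χ q a.succ)) *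
            quart4 R (e j) (e l) (e p) (e q)
        = ∑ χ : Fin (K' + 1) → Fin 4, ∑ p, ∑ q,
            ((∑ a : Fin K', Mz K' χ j a.succ * (starRingEnd ℂ) (Mz K' χ l a.succ)) *
             (∑ a : Fin K', Mz K' χ p a.succ * (starRingEnd ℂ) (Mz K' χ q a.succ))) *
              quart4 R (e j) (e l) (e p) (e q) := by
          refine Finset.sum_congr rfl fun χ _ => ?_
          rw [Finset.mul_sum]
          refine Finset.sum_congr rfl fun p _ => ?_
          rw [Finset.mul_sum]
          exact Finset.sum_congr rfl fun q _ => by ring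
      _ = _ := by
          rw [← pull2]
          exact Finset.sum_congr rfl fun p _ => Finset.sum_congr rfl fun q _ =>
            (Finset.sum_mul _ _ _).symm
  rw [Finset.sum_congr rfl fun j _ => Finset.sum_congr rfl fun l _ => step2 j l]
  have step3 : ∀ j l p q : Fin (K' + 1),
      (∑ χ : Fin (K' + 1) → Fin 4,
          ((∑ a : Fin K', Mz K' χ j a.succ * (starRingEnd ℂ) (Mz K' χ l a.succ)) *
           (∑ a : Fin K', Mz K' χ p a.succ * (starRingEnd ℂ) (Mz K' χ q a.succ)))) *
        quart4 R (e j) (e l) (e p) (e q)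
      = (if j = l then (1:ℂ) else 0) * (if p = q then (1:ℂ) else 0) *
          ((4:ℂ)^(K'+1) * (1 - 2 * iv) + (4:ℂ)^(K'+1) * iv^2) * quart4 R (e j) (e l) (e p) (e q)
        + (if j = q then (1:ℂ) else 0) * (if p = l then (1:ℂ) else 0) *
            ((4:ℂ)^(K'+1) * iv^2) * quart4 R (e j) (e l) (e p) (e q)
        - (if j = l then (1:ℂ) else 0) * (if l = p then (1:ℂ) else 0) *
            (if p = q then (1:ℂ) else 0) * ((4:ℂ)^(K'+1) * iv^2) *
            quart4 R (e j) (e l) (e p) (e q) := by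
    intro j l p q
    rw [hGG hK j l p q]
    have hsplit : (if ((j = l ∧ p = q) ∨ (j = q ∧ p = l)) then (1:ℂ) else 0)
        = (if j = l then (1:ℂ) else 0) * (if p = q then (1:ℂ) else 0)
          + (if j = q then (1:ℂ) else 0) * (if p = l then (1:ℂ) else 0)
          - (if j = l then (1:ℂ) else 0) * (if l = p then (1:ℂ) else 0)
            * (if p = q then (1:ℂ) else 0) := by
      refine boole_split _ _ _ _ _ ?_
      constructor
      · rintro ⟨a, b, c⟩
        exact ⟨⟨a, c⟩, a.trans (b.trans c), b.symm⟩
      · rintro ⟨⟨a, c⟩, d, e2⟩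
        exact ⟨a, e2.symm, c⟩
    rw [hsplit]
    ring
  rw [Finset.sum_congr rfl fun j _ => Finset.sum_congr rfl fun l _ =>
    Finset.sum_congr rfl fun p _ => Finset.sum_congr rfl fun q _ => step3 j l p q]
  simp only [Finset.sum_add_distrib, Finset.sum_sub_distrib]
  rw [col_a, col_b, col_c]
  have hBd : ∀ j p : Fin (K' + 1), quart4 R (e j) (e j) (e p) (e p) = quart n R (e j) (e p) :=
    fun j p => rfl
  have hBs : ∀ j l : Fin (K' + 1), quart4 R (e j) (e l) (e l) (e j) = quart n R (e l) (e j) :=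
    fun j l => by rw [quart4_swap13 R hkah1]; rfl
  have hswap : ∑ j, ∑ l, quart n R (e l) (e j) = ∑ j, ∑ l, quart n R (e j) (e l) :=
    Finset.sum_comm
  simp only [hBd, hBs]
  rw [hswap]


end


theorem key (n K' : ℕ) (hK : 1 ≤ K') (a b : ℝ) (R : Fin n → Fin n → Fin n → Fin n → ℂ)
    (hkah1 : ∀ i j p q, R i j p q = R p j i q)
    (hyp : ∀ f : Fin K' → EuclideanSpace ℂ (Fin n),
      Orthonormal ℂ f → 0 ≤ Sca n R a b K' f)
    (e : Fin (K' + 1) → EuclideanSpace ℂ (Fin n)) (he : Orthonormal ℂ e) :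
    0 ≤ Sca n R a b (K' + 1) e := by
  have hK0 : (0:ℝ) < (K' : ℝ) := by exact_mod_cast hK
  set Kr : ℝ := (K' : ℝ) with hKr
  set X : ℝ := (∑ j, ricQ n R (e j)).re with hX
  set Y : ℝ := (∑ j, ∑ l, quart n R (e j) (e l)).re with hY
  set D : ℝ := (∑ j, quart n R (e j) (e j)).re with hD
  set Nr : ℝ := (4:ℝ)^(K'+1) with hNr
  set iv : ℝ := (Kr + 1)⁻¹ with hiv
  -- nonnegativity of the averaged families
  have hchi : ∀ χ : Fin (K' + 1) → Fin 4, 0 ≤ Sca n R a b K' (fchi n K' e χ) :=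
    fun χ => hyp _ (fchi_orthonormal hK e he χ)
  have hse : ∀ i : Fin (K' + 1), 0 ≤ Sca n R a b K' (fun a' => e (i.succAbove a')) :=
    fun i => hyp _ (he.comp _ Fin.succAbove_right_injective)
  -- real forms of the totals
  have hre1 : (∑ χ : Fin (K' + 1) → Fin 4, ∑ a' : Fin K', ricQ n R (fchi n K' e χ a')).re
      = Nr * (1 - iv) * X := by
    rw [CC1 R e hK,
      show (4:ℂ)^(K'+1) * (1 - ((((K' : ℝ) + 1)⁻¹ : ℝ) : ℂ))
        = ((Nr * (1 - iv) : ℝ) : ℂ) by rw [hNr, hiv, hKr]; push_cast; ring,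
      Complex.re_ofReal_mul]
  have hre2 : (∑ χ : Fin (K' + 1) → Fin 4, ∑ A : Fin K', ∑ B : Fin K',
        quart n R (fchi n K' e χ A) (fchi n K' e χ B)).re
      = (Nr * (1 - 2*iv) + Nr * iv^2) * Y + (Nr * iv^2) * Y - (Nr * iv^2) * D := by
    rw [CC2 R e hK hkah1]
    rw [show ((4:ℂ)^(K'+1) * (1 - 2 * ((((K' : ℝ) + 1)⁻¹ : ℝ) : ℂ))
          + (4:ℂ)^(K'+1) * ((((K' : ℝ) + 1)⁻¹ : ℝ) : ℂ)^2)
        = ((Nr * (1 - 2*iv) + Nr * iv^2 : ℝ) : ℂ) by rw [hNr, hiv, hKr]; push_cast; ring,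
      show ((4:ℂ)^(K'+1) * ((((K' : ℝ) + 1)⁻¹ : ℝ) : ℂ)^2)
        = ((Nr * iv^2 : ℝ) : ℂ) by rw [hNr, hiv, hKr]; push_cast; ring]
    rw [Complex.sub_re, Complex.add_re, Complex.re_ofReal_mul, Complex.re_ofReal_mul,
      Complex.re_ofReal_mul]
  have hre3 : (∑ i : Fin (K' + 1), ∑ a' : Fin K', ricQ n R (e (i.succAbove a'))).re
      = Kr * X := by
    rw [CC3 R e, show ((K' : ℂ)) = ((Kr : ℝ) : ℂ) by rw [hKr]; push_cast; ring,
      Complex.re_ofReal_mul]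
  have hre4 : (∑ i : Fin (K' + 1), ∑ a' : Fin K', ∑ b' : Fin K',
        quart n R (e (i.succAbove a')) (e (i.succAbove b'))).re
      = (Kr + 1) * Y - 2 * Y + D := by
    rw [CC4 R e]
    rw [show ((K' : ℂ) + 1) = (((Kr + 1 : ℝ)) : ℂ) by rw [hKr]; push_cast; ring,
      show (2 : ℂ) = (((2:ℝ)) : ℂ) by norm_num]
    rw [Complex.add_re, Complex.sub_re, Complex.re_ofReal_mul, Complex.re_ofReal_mul]
  -- sums of Sca over the families
  have hsum1 : ∑ χ : Fin (K' + 1) → Fin 4, Sca n R a b K' (fchi n K' e χ)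
      = (a / Kr) * (Nr * (1 - iv) * X)
        + (2 * b / (Kr * (Kr + 1))) *
          ((Nr * (1 - 2*iv) + Nr * iv^2) * Y + (Nr * iv^2) * Y - (Nr * iv^2) * D) := by
    have t1 : ∑ χ : Fin (K' + 1) → Fin 4, ∑ a' : Fin K', (ricQ n R (fchi n K' e χ a')).re
        = (∑ χ : Fin (K' + 1) → Fin 4, ∑ a' : Fin K', ricQ n R (fchi n K' e χ a')).re := by
      rw [Complex.re_sum]
      exact Finset.sum_congr rfl fun χ _ => (Complex.re_sum _ _).symm
    have t2 : ∑ χ : Fin (K' + 1) → Fin 4, ∑ A : Fin K', ∑ B : Fin K',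
          (quart n R (fchi n K' e χ A) (fchi n K' e χ B)).re
        = (∑ χ : Fin (K' + 1) → Fin 4, ∑ A : Fin K', ∑ B : Fin K',
            quart n R (fchi n K' e χ A) (fchi n K' e χ B)).re := by
      rw [Complex.re_sum]
      refine Finset.sum_congr rfl fun χ _ => ?_
      rw [Complex.re_sum]
      exact Finset.sum_congr rfl fun A _ => (Complex.re_sum _ _).symm
    unfold Sca
    rw [Finset.sum_add_distrib, ← Finset.mul_sum, ← Finset.mul_sum, t1, t2, hre1, hre2]
  have hsum2 : ∑ i : Fin (K' + 1), Sca n R a b K' (fun a' => e (i.succAbove a'))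
      = (a / Kr) * (Kr * X)
        + (2 * b / (Kr * (Kr + 1))) * ((Kr + 1) * Y - 2 * Y + D) := by
    have t1 : ∑ i : Fin (K' + 1), ∑ a' : Fin K', (ricQ n R (e (i.succAbove a'))).re
        = (∑ i : Fin (K' + 1), ∑ a' : Fin K', ricQ n R (e (i.succAbove a'))).re := by
      rw [Complex.re_sum]
      exact Finset.sum_congr rfl fun i _ => (Complex.re_sum _ _).symm
    have t2 : ∑ i : Fin (K' + 1), ∑ a' : Fin K', ∑ b' : Fin K',
          (quart n R (e (i.succAbove a'))  (e (i.succAbove b'))).re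
        = (∑ i : Fin (K' + 1), ∑ a' : Fin K', ∑ b' : Fin K',
            quart n R (e (i.succAbove a')) (e (i.succAbove b'))).re := by
      rw [Complex.re_sum]
      refine Finset.sum_congr rfl fun i _ => ?_
      rw [Complex.re_sum]
      exact Finset.sum_congr rfl fun A _ => (Complex.re_sum _ _).symm
    unfold Sca
    rw [Finset.sum_add_distrib, ← Finset.mul_sum, ← Finset.mul_sum, t1, t2, hre3, hre4]
  -- weights
  set u : ℝ := (Kr + 1) / ((Kr + 2) * Nr) with hu
  set w0 : ℝ := 1 / ((Kr + 1) * (Kr + 2)) with hw0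
  have hupos : 0 < u := by rw [hu, hNr]; positivity
  have hw0pos : 0 < w0 := by rw [hw0]; positivity
  have big : 0 ≤ u * (∑ χ : Fin (K' + 1) → Fin 4, Sca n R a b K' (fchi n K' e χ))
      + w0 * (∑ i : Fin (K' + 1), Sca n R a b K' (fun a' => e (i.succAbove a'))) := by
    have s1 : 0 ≤ ∑ χ : Fin (K' + 1) → Fin 4, Sca n R a b K' (fchi n K' e χ) :=
      Finset.sum_nonneg fun χ _ => hchi χ
    have s2 : 0 ≤ ∑ i : Fin (K' + 1), Sca n R a b K' (fun a' => e (i.succAbove a')) :=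
      Finset.sum_nonneg fun i _ => hse i
    have := add_nonneg (mul_nonneg hupos.le s1) (mul_nonneg hw0pos.le s2)
    linarith
  have heq : Sca n R a b (K' + 1) e
      = u * (∑ χ : Fin (K' + 1) → Fin 4, Sca n R a b K' (fchi n K' e χ))
        + w0 * (∑ i : Fin (K' + 1), Sca n R a b K' (fun a' => e (i.succAbove a'))) := by
    rw [hsum1, hsum2]
    unfold Sca
    rw [show ((∑ i : Fin (K'+1), (ricQ n R (e i)).re) : ℝ) = X by rw [hX, Complex.re_sum],
      show ((∑ i : Fin (K'+1), ∑ j : Fin (K'+1), (quart n R (e i) (e j)).re) : ℝ) = Y by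
        rw [hY, Complex.re_sum]; exact Finset.sum_congr rfl fun i _ => (Complex.re_sum _ _).symm]
    rw [hu, hw0, hiv, hNr, hKr]
    have h1 : ((K':ℝ)) ≠ 0 := ne_of_gt hK0
    have h2 : ((K':ℝ)) + 1 ≠ 0 := by positivity
    have h3 : ((K':ℝ)) + 2 ≠ 0 := by positivity
    have h4 : (4:ℝ)^(K'+1) ≠ 0 := by positivity
    push_cast
    field_simp
    ring
  rw [heq]
  exact big


end S4

theorem stmt4 (n k : ℕ) (hk : 2 ≤ k) (hkn : k ≤ n) (a b : ℝ)
    (R : Fin n → Fin n → Fin n → Fin n → ℂ)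
    (hherm : ∀ i j p q, (starRingEnd ℂ) (R i j p q) = R j i q p)
    (hkah1 : ∀ i j p q, R i j p q = R p j i q)
    (hkah2 : ∀ i j p q, R i j p q = R i q p j)
    (hyp : ∀ f : Fin (k - 1) → EuclideanSpace ℂ (Fin n),
      Orthonormal ℂ f → 0 ≤ Sca n R a b (k - 1) f) :
    ∀ e : Fin k → EuclideanSpace ℂ (Fin n),
      Orthonormal ℂ e → 0 ≤ Sca n R a b k e := by
  intro e he
  obtain ⟨k', rfl⟩ : ∃ k', k = k' + 1 := ⟨k - 1, by omega⟩
  exact S4.key n k' (by omega) a b R hkah1 hyp e he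
end
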